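/- For every positive integer l, there exists exactly one half-full tree (up to isomorphism) with l leaves. -/

import Mathlib

inductive BTree : Type
  | leaf : BTree
  | node : BTree → BTree → BTree
deriving DecidableEq

namespace BTree

/-- Number of leaves of a binary tree. -/
def leaves : BTree → ℕ
  | leaf => 1
  | node l r => leaves l + leaves r

/-- Depth (height) of a binary tree. -/
def depth : BTree → ℕ
  | leaf => 0
  | node l r => max (depth l) (depth r) + 1

/-- Number of internal (non-leaf) nodes. -/
def internals : BTree → ℕ
  | leaf => 0
  | node l r => internals l + internals r + 1

/-- A complete binary tree: full, with all leaves at the same depth. -/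
def IsComplete : BTree → Prop
  | leaf => True
  | node l r => IsComplete l ∧ IsComplete r ∧ depth l = depth r

/-- A half-full tree (haft): every non-leaf node has two children, and its
left child is the root of a complete subtree containing at least half of the
node's leaf-descendants. -/
def IsHaft : BTree → Prop
  | leaf => True
  | node l r => IsComplete l ∧ leaves r ≤ leaves l ∧ IsHaft r

end BTree

/-!
A complete tree is determined by its depth `d` and has `2 ^ d` leaves. At the root of a haft
with `n ≥ 2` leaves the left subtree is complete with `2 ^ d` leaves and the right one has between
`1` and `2 ^ d` leaves, so `2 ^ d ≤ n - 1 < 2 ^ (d + 1)`: the left subtree is forced to be the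
complete tree of depth `log₂ (n - 1)`, and the right subtree is a haft with `n - 2 ^ d` leaves.
Induction on `n` gives both existence and uniqueness.
-/

namespace BTree

def perfect : ℕ → BTree
  | 0 => leaf
  | n + 1 => node (perfect n) (perfect n)

@[simp]
lemma depth_perfect (n : ℕ) : depth (perfect n) = n := by
  induction n with
  | zero => rfl
  | succ n ih => simp [perfect, depth, ih]

@[simp]
lemma leaves_perfect (n : ℕ) : leaves (perfect n) = 2 ^ n := by
  induction n with
  | zero => rfl
  | succ n ih => simp [perfect, leaves, ih, pow_succ, mul_two]

lemma isComplete_perfect (n : ℕ) : IsComplete (perfect n) := by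
  induction n with
  | zero => trivial
  | succ n ih => exact ⟨ih, ih, rfl⟩

lemma leaves_pos (t : BTree) : 0 < leaves t := by
  induction t with
  | leaf => exact Nat.one_pos
  | node l r ihl _ => simp only [leaves]; omega

lemma one_lt_leaves_node (l r : BTree) : 1 < leaves (node l r) := by
  have := leaves_pos l
  have := leaves_pos r
  simp only [leaves]
  omega

lemma IsComplete.eq_perfect {t : BTree} (ht : IsComplete t) : t = perfect (depth t) := by
  induction t with
  | leaf => rfl
  | node l r ihl ihr =>
    obtain ⟨hl, hr, hd⟩ := ht
    rw [depth, ← hd, max_self, perfect]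
    exact congrArg₂ node (ihl hl) (by rw [hd]; exact ihr hr)

lemma IsComplete.leaves_eq {t : BTree} (ht : IsComplete t) : leaves t = 2 ^ depth t := by
  rw [ht.eq_perfect, leaves_perfect, depth_perfect]

lemma IsHaft.left_eq_perfect {l r : BTree} (h : IsHaft (node l r)) :
    l = perfect (Nat.log 2 (leaves (node l r) - 1)) := by
  obtain ⟨hl, hle, -⟩ := h
  have hr := leaves_pos r
  have hleaves := hl.leaves_eq
  have hpow : 2 ^ (depth l + 1) = 2 * 2 ^ depth l := by ring
  have hlog : Nat.log 2 (leaves (node l r) - 1) = depth l := by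
    apply Nat.log_eq_of_pow_le_of_lt_pow <;> simp only [leaves] <;> omega
  rw [hlog, ← hl.eq_perfect]

theorem IsHaft.eq_of_leaves_eq {s t : BTree} (hs : IsHaft s) (ht : IsHaft t)
    (h : leaves s = leaves t) : s = t := by
  induction s generalizing t with
  | leaf =>
    cases t with
    | leaf => rfl
    | node l r => exact absurd h (one_lt_leaves_node l r).ne
  | node l₁ r₁ _ ihr =>
    cases t with
    | leaf => exact absurd h (one_lt_leaves_node l₁ r₁).ne'
    | node l₂ r₂ =>
      have hl : l₁ = l₂ := by rw [hs.left_eq_perfect, ht.left_eq_perfect, h]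
      subst hl
      have hr : r₁ = r₂ := ihr hs.2.2 ht.2.2 (by simp only [leaves] at h; omega)
      rw [hr]

theorem exists_isHaft_leaves_eq (n : ℕ) (hn : 0 < n) : ∃ t : BTree, IsHaft t ∧ leaves t = n := by
  induction n using Nat.strong_induction_on with
  | _ n ih =>
    obtain rfl | hn2 := (Nat.succ_le_of_lt hn).eq_or_lt
    · exact ⟨leaf, trivial, rfl⟩
    set k := Nat.log 2 (n - 1)
    have hk₁ : 2 ^ k ≤ n - 1 := Nat.pow_log_le_self 2 (by omega)
    have hk₂ : n - 1 < 2 ^ (k + 1) := Nat.lt_pow_succ_log_self (by norm_num) _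
    have hpow : 2 ^ (k + 1) = 2 * 2 ^ k := by ring
    obtain ⟨r, hr, hrn⟩ := ih (n - 2 ^ k) (by have := Nat.one_le_two_pow (n := k); omega)
      (by omega)
    refine ⟨node (perfect k) r, ⟨isComplete_perfect k, ?_, hr⟩, ?_⟩
    · rw [hrn, leaves_perfect]; omega
    · simp only [leaves, leaves_perfect, hrn]; omega

end BTree

/-- For every positive integer `l` there is exactly one half-full tree with `l` leaves. -/
theorem haft_exists_unique (l : ℕ) (hl : 0 < l) :
    ∃! t : BTree, BTree.IsHaft t ∧ BTree.leaves t = l := by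
  obtain ⟨t, ht, htl⟩ := BTree.exists_isHaft_leaves_eq l hl
  exact ⟨t, ⟨ht, htl⟩, fun s ⟨hs, hsl⟩ => hs.eq_of_leaves_eq ht (hsl.trans htl.symm)⟩
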